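/- arXiv:2305.04630 — 3 statements merged into one kernel-verified Lean document; each statement's English description precedes it below -/
import Mathlib

section
/- Let Θ ⊂ ℝ^m be a nonempty convex compact set, let f_1,…,f_N : ℝ^m → ℝ be continuously differentiable functions, each μ_i-strongly convex with L_i-Lipschitz continuous gradient, and set ℒ = (1/N)·Σ_{i=1}^N f_i, μ = (1/N)·Σ_{i=1}^N μ_i, L = (1/N)·Σ_{i=1}^N L_i. Let θ* be the (unique) minimizer of ℒ over Θ. Let η(k) = η_c/√(k+1) with 0 < η_c ≤ 1/L. On a probability space, let {h_i(k) : i = 1,…,N, k ∈ ℕ} be random variables such that almost surely h_i(k) ≥ 0 and Σ_{i=1}^N h_i(k) = 1 for every k, such that E[h_i(k)] = 1/N for all i and k, and such that for each k the random vector (h_1(k),…,h_N(k)) is independent of the σ-algebra generated by {h_j(t) : j = 1,…,N, t < k}. Define the random sequence θ(k) by a fixed initial point θ(0) ∈ Θ and θ(k+1) = P_Θ( Σ_{i=1}^N h_i(k)·( θ(k) − η(k)·∇f_i(θ(k)) ) ), where P_Θ is the metric projection onto Θ. Then lim_{k→∞} E[ ‖θ(k) − θ*‖² ] = 0. -/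
/-!
The projection onto `Θ` is nonexpansive and fixes `θ*`, and the weights of a step sum to one, so
one step changes `‖θ_k - θ*‖²` by at most `-2 η_k ∑ h_i(k) ⟪∇f_i(θ_k), θ_k - θ*⟫ + G² η_k²`, where
`G` bounds the gradients on the compact set `Θ`. The weights of step `k` are independent of `θ_k`
and have mean `1/N`, so in expectation the cross term becomes `⟪∇ℒ(θ_k), θ_k - θ*⟫`, which is at
least `ℒ(θ_k) - ℒ(θ*) + (μ/2)‖θ_k - θ*‖² ≥ (μ/2)‖θ_k - θ*‖²` by strong convexity and minimality
of `θ*`. Hence `a_k = E‖θ_k - θ*‖²` satisfies `a_{k+1} ≤ (1 - μ η_k) a_k + G² η_k²`, and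
`η_k → 0` with `∑ η_k = ∞` forces `a_k → 0`.
-/

open MeasureTheory ProbabilityTheory Filter RealInnerProductSpace

section Recursion

variable {a η : ℕ → ℝ}

theorem exists_le_of_le_sub_mul_of_not_summable (ha : ∀ k, 0 ≤ a k) (hη : ∀ k, 0 ≤ η k)
    (hηs : ¬ Summable η) {δ ε : ℝ} (hδ : 0 < δ) (K : ℕ)
    (hdec : ∀ k ≥ K, ε < a k → a (k + 1) ≤ a k - δ * η k) : ∃ k ≥ K, a k ≤ ε := by
  by_contra! hcon
  have hdesc : ∀ n, a (n + K) + δ * ∑ j ∈ Finset.range n, η (j + K) ≤ a K := by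
    intro n
    induction n with
    | zero => simp
    | succ n ih =>
      have := hdec (n + K) (by omega) (hcon _ (by omega))
      rw [Finset.sum_range_succ, Nat.succ_add]
      linarith
  have htail : Tendsto (fun n => ∑ j ∈ Finset.range n, η (j + K)) atTop atTop :=
    (not_summable_iff_tendsto_nat_atTop_of_nonneg fun j => hη _).1
      ((summable_nat_add_iff K).not.2 hηs)
  obtain ⟨n, hn⟩ := (htail.eventually_gt_atTop (a K / δ)).exists
  have := hdesc n
  have := ha (n + K)
  rw [div_lt_iff₀' hδ] at hn
  linarith

theorem tendsto_zero_of_le_one_sub_mul_add_mul_sq (ha : ∀ k, 0 ≤ a k) (hη : ∀ k, 0 ≤ η k)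
    (hη0 : Tendsto η atTop (nhds 0)) (hηs : ¬ Summable η) {c C : ℝ} (hc : 0 < c)
    (hrec : ∀ k, a (k + 1) ≤ (1 - c * η k) * a k + C * η k ^ 2) :
    Tendsto a atTop (nhds 0) := by
  refine tendsto_order.2 ⟨fun b hb => Eventually.of_forall fun k => hb.trans_le (ha k),
    fun ε hε => ?_⟩
  have hsmall : ∀ᶠ k in atTop, c * η k < 1 ∧ C * η k < c * (ε / 2) / 2 := by
    have hcη : Tendsto (fun k => c * η k) atTop (nhds 0) := by simpa using hη0.const_mul c
    have hCη : Tendsto (fun k => C * η k) atTop (nhds 0) := by simpa using hη0.const_mul C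
    exact (hcη.eventually_lt_const one_pos).and (hCη.eventually_lt_const (by positivity))
  obtain ⟨K, hK⟩ := eventually_atTop.1 hsmall
  have hstep : ∀ k ≥ K, a (k + 1) ≤ (1 - c * η k) * a k + c * (ε / 2) / 2 * η k := by
    intro k hk
    have := mul_le_mul_of_nonneg_right (hK k hk).2.le (hη k)
    linarith [hrec k]
  obtain ⟨k₀, hk₀K, hk₀⟩ := exists_le_of_le_sub_mul_of_not_summable (ε := ε / 2) ha hη hηs
    (by positivity : 0 < c * (ε / 2) / 2) K fun k hk hak => by
      nlinarith [hstep k hk, mul_le_mul_of_nonneg_left hak.le (mul_nonneg hc.le (hη k))]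
  have hinv : ∀ k ≥ k₀, a k ≤ ε / 2 := by
    intro k hk
    induction k, hk using Nat.le_induction with
    | base => exact hk₀
    | succ k hk ih =>
      have h1 : 0 ≤ 1 - c * η k := by linarith [(hK k (hk₀K.trans hk)).1]
      nlinarith [hstep k (hk₀K.trans hk), mul_le_mul_of_nonneg_left ih h1,
        mul_nonneg hc.le (hη k)]
  exact eventually_atTop.2 ⟨k₀, fun k hk => (hinv k hk).trans_lt (by linarith)⟩

end Recursion

section Projection

variable {F : Type*} [NormedAddCommGroup F] [InnerProductSpace ℝ F] {Θ : Set F}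

theorem inner_sub_nonpos_of_forall_dist_le (hΘ : Convex ℝ Θ) {x p : F} (hp : p ∈ Θ)
    (hmin : ∀ q ∈ Θ, dist x p ≤ dist x q) {w : F} (hw : w ∈ Θ) : ⟪x - p, w - p⟫ ≤ 0 := by
  have : Nonempty Θ := ⟨⟨p, hp⟩⟩
  refine (norm_eq_iInf_iff_real_inner_le_zero hΘ hp).1 (le_antisymm ?_ ?_) w hw
  · exact le_ciInf fun q => by simpa [dist_eq_norm] using hmin q q.2
  · refine ciInf_le ?_ (⟨p, hp⟩ : Θ)
    exact ⟨0, Set.forall_mem_range.2 fun _ => norm_nonneg _⟩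

variable {proj : F → F}

theorem lipschitzWith_one_of_forall_dist_le (hΘ : Convex ℝ Θ)
    (hproj : ∀ x, proj x ∈ Θ ∧ ∀ q ∈ Θ, dist x (proj x) ≤ dist x q) :
    LipschitzWith 1 proj := by
  refine LipschitzWith.mk_one fun x y => ?_
  rw [dist_eq_norm, dist_eq_norm]
  have hx := inner_sub_nonpos_of_forall_dist_le hΘ (hproj x).1 (hproj x).2 (hproj y).1
  have hy := inner_sub_nonpos_of_forall_dist_le hΘ (hproj y).1 (hproj y).2 (hproj x).1
  -- the two variational inequalities add up to firm nonexpansiveness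
  have hfirm : ‖proj x - proj y‖ ^ 2 ≤ ⟪x - y, proj x - proj y⟫ := by
    have : ⟪x - proj x, proj y - proj x⟫ + ⟪y - proj y, proj x - proj y⟫
        = ‖proj x - proj y‖ ^ 2 - ⟪x - y, proj x - proj y⟫ := by
      rw [← real_inner_self_eq_norm_sq]
      simp only [inner_sub_left, inner_sub_right, real_inner_comm]
      ring
    linarith
  have hcs := real_inner_le_norm (x - y) (proj x - proj y)
  nlinarith [norm_nonneg (proj x - proj y), norm_nonneg (x - y)]

theorem norm_sub_le_of_forall_dist_le (hΘ : Convex ℝ Θ)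
    (hproj : ∀ x, proj x ∈ Θ ∧ ∀ q ∈ Θ, dist x (proj x) ≤ dist x q) (x : F) {q : F}
    (hq : q ∈ Θ) : ‖proj x - q‖ ≤ ‖x - q‖ := by
  have hfix : proj q = q := by
    simpa [eq_comm] using (hproj q).2 q hq
  simpa [dist_eq_norm, hfix] using (lipschitzWith_one_of_forall_dist_le hΘ hproj).dist_le_mul x q

variable {ι : Type*} [Fintype ι]

theorem norm_proj_sum_smul_sub_sq_le (hΘ : Convex ℝ Θ)
    (hproj : ∀ x, proj x ∈ Θ ∧ ∀ q ∈ Θ, dist x (proj x) ≤ dist x q) {θs : F} (hθs : θs ∈ Θ)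
    {w : ι → ℝ} (hw0 : ∀ i, 0 ≤ w i) (hw1 : ∑ i, w i = 1) {v : ι → F} {G : ℝ}
    (hv : ∀ i, ‖v i‖ ≤ G) (x : F) (η : ℝ) :
    ‖proj (∑ i, w i • (x - η • v i)) - θs‖ ^ 2
      ≤ ‖x - θs‖ ^ 2 - 2 * η * ∑ i, w i * ⟪v i, x - θs⟫ + G ^ 2 * η ^ 2 := by
  set u := ∑ i, w i • v i
  have hu : ‖u‖ ≤ G := mem_closedBall_zero_iff.1 <|
    (convex_closedBall 0 G).sum_mem (fun i _ => hw0 i) hw1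
      fun i _ => mem_closedBall_zero_iff.2 (hv i)
  have hstep : ∑ i, w i • (x - η • v i) = x - η • u := by
    simp only [smul_sub, Finset.sum_sub_distrib, ← Finset.sum_smul, hw1, one_smul, u,
      Finset.smul_sum, smul_comm η]
  have hinner : ⟪u, x - θs⟫ = ∑ i, w i * ⟪v i, x - θs⟫ := by
    simp only [u, sum_inner, real_inner_smul_left]
  have hsq : η ^ 2 * ‖u‖ ^ 2 ≤ G ^ 2 * η ^ 2 := by
    nlinarith [pow_le_pow_left₀ (norm_nonneg u) hu 2, sq_nonneg η]
  calc ‖proj (∑ i, w i • (x - η • v i)) - θs‖ ^ 2 ≤ ‖(x - θs) - η • u‖ ^ 2 := by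
        rw [hstep, sub_right_comm]
        exact pow_le_pow_left₀ (norm_nonneg _) (norm_sub_le_of_forall_dist_le hΘ hproj _ hθs) 2
    _ = ‖x - θs‖ ^ 2 - 2 * η * ⟪u, x - θs⟫ + η ^ 2 * ‖u‖ ^ 2 := by
        rw [norm_sub_sq_real, real_inner_smul_right, norm_smul, mul_pow, Real.norm_eq_abs,
          sq_abs, real_inner_comm]
        ring
    _ ≤ _ := by rw [hinner]; linarith

end Projection

section StepSize

theorem tendsto_div_sqrt_add_one (c : ℝ) :
    Tendsto (fun k : ℕ => c / Real.sqrt (k + 1)) atTop (nhds 0) := by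
  simpa [div_eq_mul_inv] using (tendsto_inv_atTop_zero.comp (Real.tendsto_sqrt_atTop.comp
    (tendsto_atTop_add_const_right atTop 1 tendsto_natCast_atTop_atTop))).const_mul c

theorem not_summable_div_sqrt_add_one {c : ℝ} (hc : c ≠ 0) :
    ¬ Summable (fun k : ℕ => c / Real.sqrt (k + 1)) := by
  have hp : ¬ Summable (fun k : ℕ => 1 / |(k : ℝ) + 1| ^ (1 / 2 : ℝ)) := by
    rw [Real.summable_one_div_nat_add_rpow]
    norm_num
  have heq : (fun k : ℕ => c / Real.sqrt (k + 1))
      = fun k : ℕ => c * (1 / |(k : ℝ) + 1| ^ (1 / 2 : ℝ)) := by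
    ext k
    rw [abs_of_pos (by positivity), ← Real.sqrt_eq_rpow, mul_one_div]
  rwa [heq, summable_mul_left_iff hc]

end StepSize

section StronglyConvex

variable {E : Type*} [NormedAddCommGroup E] [InnerProductSpace ℝ E] {ι : Type*} [Fintype ι]

theorem sum_mul_norm_sq_le_sum_inner_of_strongConvex {f : ι → E → ℝ} {g : ι → E → E}
    {μ : ι → ℝ} (hsc : ∀ i x y, f i y - f i x ≥ ⟪g i x, y - x⟫ + μ i / 2 * ‖y - x‖ ^ 2)
    {p : ι → ℝ} (hp : ∀ i, 0 ≤ p i) {x θs : E}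
    (hmin : ∑ i, p i * f i θs ≤ ∑ i, p i * f i x) :
    (∑ i, p i * μ i) / 2 * ‖x - θs‖ ^ 2 ≤ ∑ i, p i * ⟪g i x, x - θs⟫ := by
  have hterm : ∀ i, p i * μ i / 2 * ‖x - θs‖ ^ 2 + (p i * f i x - p i * f i θs)
      ≤ p i * ⟪g i x, x - θs⟫ := by
    intro i
    have hi := hsc i x θs
    rw [← neg_sub x θs, inner_neg_right, norm_neg] at hi
    nlinarith [mul_le_mul_of_nonneg_left hi (hp i)]
  have hsum := Finset.sum_le_sum fun i (_ : i ∈ Finset.univ) => hterm i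
  simp only [Finset.sum_add_distrib, Finset.sum_sub_distrib, ← Finset.sum_mul,
    ← Finset.sum_div] at hsum
  linarith

end StronglyConvex

section Probability

variable {Ω : Type*} {m mΩ : MeasurableSpace Ω} {P : Measure Ω}

theorem integral_mul_eq_mul_integral_of_indep {m₁ m₂ : MeasurableSpace Ω}
    (hind : Indep m₁ m₂ P) (hm₁ : m₁ ≤ mΩ) (hm₂ : m₂ ≤ mΩ) {X Y : Ω → ℝ}
    (hX : Measurable[m₁] X) (hY : Measurable[m₂] Y) :
    ∫ ω, X ω * Y ω ∂P = (∫ ω, X ω ∂P) * ∫ ω, Y ω ∂P := by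
  have hXY : IndepFun X Y P :=
    indep_of_indep_of_le_left (indep_of_indep_of_le_right hind hY.comap_le) hX.comap_le
  exact hXY.integral_fun_mul_eq_mul_integral (hX.mono hm₁ le_rfl).aestronglyMeasurable
    (hY.mono hm₂ le_rfl).aestronglyMeasurable

theorem integrable_comp_of_isCompact [IsFiniteMeasure P] {E : Type*} [TopologicalSpace E]
    [MeasurableSpace E] [OpensMeasurableSpace E] {Θ : Set E} (hΘ : IsCompact Θ) {φ : E → ℝ}
    (hφ : Continuous φ) {X : Ω → E} (hX : Measurable X) (hXΘ : ∀ ω, X ω ∈ Θ) :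
    Integrable (fun ω => φ (X ω)) P := by
  obtain ⟨B, hB⟩ := hΘ.exists_bound_of_continuousOn hφ.continuousOn
  exact .of_bound (hφ.measurable.comp hX).aestronglyMeasurable B
    (ae_of_all _ fun ω => hB _ (hXΘ ω))

variable {ι : Type*}

theorem integral_mul_comp_eq_of_indep {E : Type*} [MeasurableSpace E] {w : ι → Ω → ℝ}
    (hw : ∀ i, Measurable (w i)) (hm : m ≤ mΩ)
    (hind : Indep (MeasurableSpace.comap (fun ω i => w i ω) inferInstance) m P)
    {φ : E → ℝ} (hφ : Measurable φ) {X : Ω → E} (hX : Measurable[m] X) (i : ι) :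
    ∫ ω, w i ω * φ (X ω) ∂P = (∫ ω, w i ω ∂P) * ∫ ω, φ (X ω) ∂P :=
  integral_mul_eq_mul_integral_of_indep hind (measurable_iff_comap_le.1 (measurable_pi_iff.2 hw))
    hm ((measurable_pi_apply i).comp (f := fun ω i => w i ω) (Measurable.of_comap_le le_rfl))
    (hφ.comp hX)

abbrev pastWeights (h : ℕ → ι → Ω → ℝ) (k : ℕ) : MeasurableSpace Ω :=
  ⨆ (t : ℕ) (_ : t < k) (j : ι), MeasurableSpace.comap (h t j) inferInstance

variable {h : ℕ → ι → Ω → ℝ}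

theorem pastWeights_le (hmeas : ∀ k i, Measurable (h k i)) (k : ℕ) : pastWeights h k ≤ mΩ :=
  iSup₂_le fun t _ => iSup_le fun j => (hmeas t j).comap_le

theorem measurable_pastWeights {t k : ℕ} (htk : t < k) (j : ι) :
    Measurable[pastWeights h k] (h t j) :=
  measurable_iff_comap_le.2 (le_iSup₂_of_le t htk (le_iSup_of_le j le_rfl))

theorem pastWeights_mono : Monotone (pastWeights h) := fun _ _ hkk =>
  iSup₂_le fun t ht => le_iSup₂_of_le t (ht.trans_le hkk) le_rfl

theorem measurable_pastWeights_iterate [Fintype ι] {E : Type*} [NormedAddCommGroup E]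
    [NormedSpace ℝ E] [MeasurableSpace E] [BorelSpace E] [SecondCountableTopology E]
    {T : ℕ → ι → E → E} (hT : ∀ k i, Continuous (T k i)) {proj : E → E} (hproj : Continuous proj)
    {θ : ℕ → Ω → E} {θ₀ : E} (hinit : ∀ ω, θ 0 ω = θ₀)
    (hrec : ∀ k ω, θ (k + 1) ω = proj (∑ i, h k i ω • T k i (θ k ω))) (k : ℕ) :
    Measurable[pastWeights h k] (θ k) := by
  induction k with
  | zero => rw [funext hinit]; exact measurable_const
  | succ k ih =>
    rw [funext (hrec k)]
    refine hproj.measurable.comp (Finset.measurable_sum _ fun i _ => ?_)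
    exact (measurable_pastWeights k.lt_succ_self i).smul
      ((hT k i).measurable.comp (ih.mono (pastWeights_mono k.le_succ) le_rfl))

end Probability

section OneStep

variable {E : Type*} [NormedAddCommGroup E] [InnerProductSpace ℝ E] [MeasurableSpace E]
  [BorelSpace E] {ι : Type*} [Fintype ι]
  {Ω : Type*} {m mΩ : MeasurableSpace Ω} {P : Measure Ω} [IsProbabilityMeasure P]

theorem integral_norm_proj_step_sub_sq_le {Θ : Set E} (hΘ : Convex ℝ Θ) (hΘc : IsCompact Θ)
    {proj : E → E} (hproj : ∀ x, proj x ∈ Θ ∧ ∀ q ∈ Θ, dist x (proj x) ≤ dist x q)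
    {θs : E} (hθs : θs ∈ Θ) {g : ι → E → E} (hg : ∀ i, Continuous (g i)) {G : ℝ}
    (hG : ∀ i, ∀ x ∈ Θ, ‖g i x‖ ≤ G) {p : ι → ℝ} {c : ℝ}
    (hlow : ∀ x ∈ Θ, c * ‖x - θs‖ ^ 2 ≤ ∑ i, p i * ⟪g i x, x - θs⟫)
    {w : ι → Ω → ℝ} (hw : ∀ i, Measurable (w i))
    (hw1 : ∀ᵐ ω ∂P, (∀ i, 0 ≤ w i ω) ∧ ∑ i, w i ω = 1) (hwE : ∀ i, ∫ ω, w i ω ∂P = p i)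
    (hm : m ≤ mΩ)
    (hind : Indep (MeasurableSpace.comap (fun ω i => w i ω) inferInstance) m P)
    {X : Ω → E} (hX : Measurable[m] X) (hXΘ : ∀ ω, X ω ∈ Θ) {η : ℝ} (hη : 0 ≤ η) :
    ∫ ω, ‖proj (∑ i, w i ω • (X ω - η • g i (X ω))) - θs‖ ^ 2 ∂P
      ≤ (1 - 2 * c * η) * ∫ ω, ‖X ω - θs‖ ^ 2 ∂P + G ^ 2 * η ^ 2 := by
  set ψ : ι → Ω → ℝ := fun i ω => ⟪g i (X ω), X ω - θs⟫
  have hψ : ∀ i, Continuous fun x => ⟪g i x, x - θs⟫ := fun i =>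
    (hg i).inner (continuous_id.sub continuous_const)
  have hXm : Measurable[mΩ] X := hX.mono hm le_rfl
  have hIX : Integrable (fun ω => ‖X ω - θs‖ ^ 2) P :=
    integrable_comp_of_isCompact hΘc ((continuous_id.sub continuous_const).norm.pow 2) hXm hXΘ
  have hIψ : ∀ i, Integrable (ψ i) P := fun i =>
    integrable_comp_of_isCompact hΘc (hψ i) hXm hXΘ
  have hIwψ : ∀ i, Integrable (fun ω => w i ω * ψ i ω) P := fun i => by
    refine (hIψ i).bdd_mul (c := 1) (hw i).aestronglyMeasurable ?_
    filter_upwards [hw1] with ω ⟨hw0, hsum⟩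
    rw [Real.norm_eq_abs, abs_of_nonneg (hw0 i), ← hsum]
    exact Finset.single_le_sum (fun j _ => hw0 j) (Finset.mem_univ i)
  have hIsum : Integrable (fun ω => ∑ i, w i ω * ψ i ω) P :=
    integrable_finsetSum _ fun i _ => hIwψ i
  have hIdrift : Integrable (fun ω => ‖X ω - θs‖ ^ 2 - 2 * η * ∑ i, w i ω * ψ i ω) P :=
    hIX.sub (hIsum.const_mul _)
  have hcross : ∀ i, ∫ ω, w i ω * ψ i ω ∂P = p i * ∫ ω, ψ i ω ∂P := fun i => by
    rw [integral_mul_comp_eq_of_indep hw hm hind (hψ i).measurable hX i, hwE]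
  have hmean : c * ∫ ω, ‖X ω - θs‖ ^ 2 ∂P ≤ ∑ i, p i * ∫ ω, ψ i ω ∂P := by
    simp only [← integral_const_mul]
    rw [← integral_finsetSum _ fun i _ => (hIψ i).const_mul _]
    exact integral_mono (hIX.const_mul c) (integrable_finsetSum _ fun i _ => (hIψ i).const_mul _)
      fun ω => hlow _ (hXΘ ω)
  calc ∫ ω, ‖proj (∑ i, w i ω • (X ω - η • g i (X ω))) - θs‖ ^ 2 ∂P
      ≤ ∫ ω, (‖X ω - θs‖ ^ 2 - 2 * η * ∑ i, w i ω * ψ i ω + G ^ 2 * η ^ 2) ∂P := by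
        refine integral_mono_of_nonneg (ae_of_all _ fun ω => sq_nonneg _)
          (hIdrift.add (integrable_const _)) ?_
        filter_upwards [hw1] with ω ⟨hw0, hsum⟩
        exact norm_proj_sum_smul_sub_sq_le hΘ hproj hθs hw0 hsum (fun i => hG i _ (hXΘ ω)) _ η
    _ = ∫ ω, ‖X ω - θs‖ ^ 2 ∂P - 2 * η * ∑ i, p i * ∫ ω, ψ i ω ∂P + G ^ 2 * η ^ 2 := by
        rw [integral_add hIdrift (integrable_const _),
          integral_sub hIX (hIsum.const_mul _), integral_const_mul,
          integral_finsetSum _ fun i _ => hIwψ i]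
        simp [hcross]
    _ ≤ _ := by nlinarith [mul_le_mul_of_nonneg_left hmean hη]

end OneStep

theorem statement_0_general (m N : ℕ) (hN : 0 < N)
    (Θ : Set (EuclideanSpace ℝ (Fin m)))
    (hconv : Convex ℝ Θ) (hcomp : IsCompact Θ)
    (f : Fin N → EuclideanSpace ℝ (Fin m) → ℝ) (μv : Fin N → ℝ)
    (hμv : ∀ i, 0 < μv i)
    (hf : ∀ i, ContDiff ℝ 1 (f i))
    (hsc : ∀ i, ∀ x y : EuclideanSpace ℝ (Fin m),
      f i y - f i x ≥ ⟪gradient (f i) x, y - x⟫ + μv i / 2 * ‖y - x‖ ^ 2)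
    (ℒ : EuclideanSpace ℝ (Fin m) → ℝ)
    (hℒ : ∀ x, ℒ x = (1 / (N : ℝ)) * ∑ i, f i x)
    (θs : EuclideanSpace ℝ (Fin m)) (hθsΘ : θs ∈ Θ)
    (hmin : ∀ θ ∈ Θ, ℒ θs ≤ ℒ θ)
    (ηc : ℝ) (hηc0 : 0 < ηc)
    (η : ℕ → ℝ) (hη : ∀ k : ℕ, η k = ηc / Real.sqrt (k + 1))
    {Ω : Type*} [MeasurableSpace Ω] (P : Measure Ω) [IsProbabilityMeasure P]
    (h : ℕ → Fin N → Ω → ℝ) (hmeas : ∀ k i, Measurable (h k i))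
    (hh : ∀ k : ℕ, ∀ᵐ ω ∂P, (∀ i, 0 ≤ h k i ω) ∧ ∑ i, h k i ω = 1)
    (hhE : ∀ k i, ∫ ω, h k i ω ∂P = 1 / (N : ℝ))
    (hindep : ∀ k : ℕ, Indep
      (MeasurableSpace.comap (fun ω => fun i => h k i ω) inferInstance)
      (⨆ (t : ℕ) (_ : t < k) (j : Fin N),
        MeasurableSpace.comap (h t j) inferInstance) P)
    (proj : EuclideanSpace ℝ (Fin m) → EuclideanSpace ℝ (Fin m))
    (hproj : ∀ x, proj x ∈ Θ ∧ ∀ q ∈ Θ, dist x (proj x) ≤ dist x q)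
    (θ0 : EuclideanSpace ℝ (Fin m)) (hθ0Θ : θ0 ∈ Θ)
    (θseq : ℕ → Ω → EuclideanSpace ℝ (Fin m))
    (hinit : ∀ ω, θseq 0 ω = θ0)
    (hrec : ∀ (k : ℕ) (ω : Ω), θseq (k + 1) ω =
      proj (∑ i, h k i ω • (θseq k ω - η k • gradient (f i) (θseq k ω)))) :
    Tendsto (fun k : ℕ => ∫ ω, ‖θseq k ω - θs‖ ^ 2 ∂P) atTop (nhds 0) := by
  have hg : ∀ i, Continuous (gradient (f i)) := fun i =>
    (InnerProductSpace.toDual ℝ _).symm.continuous.comp ((hf i).continuous_fderiv one_ne_zero)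
  obtain ⟨G, hG⟩ := hcomp.exists_bound_of_continuousOn (continuous_pi hg).continuousOn
  obtain ⟨c, hc, hlow⟩ : ∃ c > 0, ∀ x ∈ Θ,
      c * ‖x - θs‖ ^ 2 ≤ ∑ i, 1 / (N : ℝ) * ⟪gradient (f i) x, x - θs⟫ :=
    ⟨(∑ i, 1 / (N : ℝ) * μv i) / 2,
      half_pos (Finset.sum_pos (fun i _ => by have := hμv i; positivity) ⟨⟨0, hN⟩, by simp⟩),
      fun x hx => sum_mul_norm_sq_le_sum_inner_of_strongConvex hsc (fun _ => by positivity)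
        (by simpa only [hℒ, Finset.mul_sum] using hmin x hx)⟩
  have hθΘ : ∀ k ω, θseq k ω ∈ Θ := by
    rintro (_ | k) ω
    · exact hinit ω ▸ hθ0Θ
    · exact hrec k ω ▸ (hproj _).1
  have hθ := measurable_pastWeights_iterate (T := fun k i x => x - η k • gradient (f i) x)
    (fun k i => continuous_id.sub ((hg i).const_smul (η k)))
    (lipschitzWith_one_of_forall_dist_le hconv hproj).continuous hinit hrec
  have hηpos : ∀ k, 0 ≤ η k := fun k => by rw [hη]; positivity
  have hstep : ∀ k, ∫ ω, ‖θseq (k + 1) ω - θs‖ ^ 2 ∂P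
      ≤ (1 - 2 * c * η k) * ∫ ω, ‖θseq k ω - θs‖ ^ 2 ∂P + G ^ 2 * η k ^ 2 := fun k => by
    simp only [hrec k]
    exact integral_norm_proj_step_sub_sq_le hconv hcomp hproj hθsΘ hg
      (fun i x hx => (norm_le_pi_norm _ i).trans (hG x hx)) hlow (hmeas k) (hh k) (hhE k)
      (pastWeights_le hmeas k) (hindep k) (hθ k) (hθΘ k) (hηpos k)
  rw [show η = fun k : ℕ => ηc / Real.sqrt (k + 1) from funext hη] at hstep hηpos
  exact tendsto_zero_of_le_one_sub_mul_add_mul_sq (fun k => integral_nonneg fun ω => sq_nonneg _)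
    hηpos (tendsto_div_sqrt_add_one ηc) (not_summable_div_sqrt_add_one hηc0.ne') (by positivity)
    hstep

/-- Convergence of the FedCOTA iterates.  `Θ ⊆ ℝ^m` is a nonempty
convex compact set, the `f i` are continuously differentiable, `μ i`-strongly
convex with `L i`-Lipschitz gradients, `ℒ` is their average, `θ*` the minimizer
of `ℒ` over `Θ`, `η k = η_c/√(k+1)` with `0 < η_c ≤ 1/L` where `L = (1/N)∑ L i`.
The random weights `h k i` are a.s. nonnegative and sum to `1`, have mean `1/N`,
and at each step `k` are independent of the past.  `P_Θ` is the metric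
projection onto `Θ` and the iterates satisfy
`θ (k+1) = P_Θ (∑ i, h k i • (θ k - η k • ∇f i (θ k)))` from `θ 0 = θ₀ ∈ Θ`.
Then `E[‖θ k - θ*‖²] → 0`. -/
theorem statement_0 (m N : ℕ) (hN : 0 < N)
    (Θ : Set (EuclideanSpace ℝ (Fin m)))
    (hne : Θ.Nonempty) (hconv : Convex ℝ Θ) (hcomp : IsCompact Θ)
    (f : Fin N → EuclideanSpace ℝ (Fin m) → ℝ) (μv L : Fin N → ℝ)
    (hμv : ∀ i, 0 < μv i)
    (hf : ∀ i, ContDiff ℝ 1 (f i))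
    (hsc : ∀ i, ∀ x y : EuclideanSpace ℝ (Fin m),
      f i y - f i x ≥ ⟪gradient (f i) x, y - x⟫ + μv i / 2 * ‖y - x‖ ^ 2)
    (hlip : ∀ i, ∀ x y : EuclideanSpace ℝ (Fin m),
      ‖gradient (f i) x - gradient (f i) y‖ ≤ L i * ‖x - y‖)
    (ℒ : EuclideanSpace ℝ (Fin m) → ℝ)
    (hℒ : ∀ x, ℒ x = (1 / (N : ℝ)) * ∑ i, f i x)
    (θs : EuclideanSpace ℝ (Fin m)) (hθsΘ : θs ∈ Θ)
    (hmin : ∀ θ ∈ Θ, ℒ θs ≤ ℒ θ)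
    (ηc : ℝ) (hηc0 : 0 < ηc) (hηcL : ηc ≤ 1 / ((1 / (N : ℝ)) * ∑ i, L i))
    (η : ℕ → ℝ) (hη : ∀ k : ℕ, η k = ηc / Real.sqrt (k + 1))
    {Ω : Type*} [MeasurableSpace Ω] (P : Measure Ω) [IsProbabilityMeasure P]
    (h : ℕ → Fin N → Ω → ℝ) (hmeas : ∀ k i, Measurable (h k i))
    (hh : ∀ k : ℕ, ∀ᵐ ω ∂P, (∀ i, 0 ≤ h k i ω) ∧ ∑ i, h k i ω = 1)
    (hhE : ∀ k i, ∫ ω, h k i ω ∂P = 1 / (N : ℝ))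
    (hindep : ∀ k : ℕ, Indep
      (MeasurableSpace.comap (fun ω => fun i => h k i ω) inferInstance)
      (⨆ (t : ℕ) (_ : t < k) (j : Fin N),
        MeasurableSpace.comap (h t j) inferInstance) P)
    (proj : EuclideanSpace ℝ (Fin m) → EuclideanSpace ℝ (Fin m))
    (hproj : ∀ x, proj x ∈ Θ ∧ ∀ q ∈ Θ, dist x (proj x) ≤ dist x q)
    (θ0 : EuclideanSpace ℝ (Fin m)) (hθ0Θ : θ0 ∈ Θ)
    (θseq : ℕ → Ω → EuclideanSpace ℝ (Fin m))
    (hinit : ∀ ω, θseq 0 ω = θ0)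
    (hrec : ∀ (k : ℕ) (ω : Ω), θseq (k + 1) ω =
      proj (∑ i, h k i ω • (θseq k ω - η k • gradient (f i) (θseq k ω)))) :
    Tendsto (fun k : ℕ => ∫ ω, ‖θseq k ω - θs‖ ^ 2 ∂P) atTop (nhds 0) :=
  statement_0_general m N hN Θ hconv hcomp f μv hμv hf hsc ℒ hℒ θs hθsΘ hmin ηc hηc0 η hη P h hmeas
    hh hhE hindep proj hproj θ0 hθ0Θ θseq hinit hrec
end

section
/- Let μ > 0, M ≥ 0 and η(k) = η_c/√(k+1) with 0 < η_c·μ ≤ 1, and set C_k = 1 − η(k)·μ. If (a(k))_{k≥0} is a sequence of nonnegative real numbers satisfying a(k+1) ≤ C_k·a(k) + η(k)²·M² for all k ≥ 0, then lim_{k→∞} a(k) = 0. -/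
open Filter

/-- Let `μ > 0`, `M ≥ 0`, `η k = η_c / √(k+1)` with `0 < η_c * μ ≤ 1`,
and `C k = 1 - η k * μ`.  If `a` is a nonnegative sequence with
`a (k+1) ≤ C k * a k + (η k)^2 * M^2` for all `k`, then `a k → 0`. -/
theorem statement_1 (μ M ηc : ℝ) (hμ : 0 < μ) (hM : 0 ≤ M)
    (hηc : 0 < ηc) (hηcμ : ηc * μ ≤ 1)
    (η : ℕ → ℝ) (hη : ∀ k : ℕ, η k = ηc / Real.sqrt (k + 1))
    (C : ℕ → ℝ) (hC : ∀ k : ℕ, C k = 1 - η k * μ)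
    (a : ℕ → ℝ) (ha0 : ∀ k : ℕ, 0 ≤ a k)
    (hrec : ∀ k : ℕ, a (k + 1) ≤ C k * a k + (η k) ^ 2 * M ^ 2) :
    Tendsto a atTop (nhds 0) := by
  have hsq1 : ∀ k : ℕ, (1:ℝ) ≤ Real.sqrt (k + 1) := by
    intro k
    have h := Real.sqrt_le_sqrt (show (1:ℝ) ≤ (k:ℝ) + 1 by
      have := Nat.cast_nonneg (α := ℝ) k; linarith)
    simpa using h
  have hsqpos : ∀ k : ℕ, (0:ℝ) < Real.sqrt (k + 1) := fun k => lt_of_lt_of_le one_pos (hsq1 k)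
  have hηpos : ∀ k, 0 < η k := by
    intro k; rw [hη]; exact div_pos hηc (hsqpos k)
  have hbpos : ∀ k, 0 < η k * μ := fun k => mul_pos (hηpos k) hμ
  have hb1 : ∀ k, η k * μ ≤ 1 := by
    intro k
    rw [hη, div_mul_eq_mul_div, div_le_one (hsqpos k)]
    exact hηcμ.trans (hsq1 k)
  -- η tends to 0
  have hsqtop : Tendsto (fun k : ℕ => Real.sqrt ((k : ℝ) + 1)) atTop atTop := by
    refine tendsto_atTop_atTop.2 fun b => ⟨⌈b ^ 2⌉₊, fun k hk => ?_⟩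
    have h1 : b ^ 2 ≤ (k : ℝ) + 1 := by
      have := Nat.ceil_le.1 (le_refl ⌈b ^ 2⌉₊)
      have h2 : (⌈b ^ 2⌉₊ : ℝ) ≤ (k : ℝ) := Nat.cast_le.2 hk
      linarith [Nat.le_ceil (b ^ 2)]
    have h3 := Real.sqrt_le_sqrt h1
    rw [Real.sqrt_sq_eq_abs] at h3
    exact (le_abs_self b).trans h3
  have hηto0 : Tendsto η atTop (nhds 0) := by
    have := Tendsto.div_atTop (f := fun _ : ℕ => ηc) (l := atTop) tendsto_const_nhds hsqtop
    refine this.congr fun k => ?_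
    rw [hη]
  -- divergence of partial sums of η k * μ
  have hdiv : Tendsto (fun n => ∑ k ∈ Finset.range n, η k * μ) atTop atTop := by
    have h1 : Tendsto (fun n => ηc * μ * ∑ k ∈ Finset.range n, (1:ℝ) / (k + 1)) atTop atTop := by
      exact Tendsto.const_mul_atTop (mul_pos hηc hμ) Real.tendsto_sum_range_one_div_nat_succ_atTop
    apply tendsto_atTop_mono _ h1
    intro n
    rw [Finset.mul_sum]
    apply Finset.sum_le_sum
    intro k _
    rw [hη, div_mul_eq_mul_div]
    rw [mul_one_div, div_le_div_iff₀ (by positivity) (hsqpos k)]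
    have hle : Real.sqrt ((k:ℝ) + 1) ≤ (k:ℝ) + 1 := by
      nlinarith [Real.sq_sqrt (show (0:ℝ) ≤ (k:ℝ)+1 by positivity), hsqpos k, hsq1 k]
    nlinarith [mul_pos hηc hμ]
  -- main estimate
  rw [Metric.tendsto_atTop]
  intro ε hε
  set δ := ε / 2 with hδ
  have hδpos : 0 < δ := by positivity
  -- choose k0 with η k * M^2 ≤ μ * (δ/2) for k ≥ k0
  have hev : ∀ᶠ k in atTop, η k * M ^ 2 ≤ μ * (δ / 2) := by
    have h2 : Tendsto (fun k => η k * M ^ 2) atTop (nhds 0) := by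
      simpa using hηto0.mul_const (M ^ 2)
    exact h2.eventually_le_const (by positivity)
  obtain ⟨k0, hk0⟩ := eventually_atTop.1 hev
  -- refined recursion for k ≥ k0
  have hrec2 : ∀ k, k0 ≤ k → a (k + 1) ≤ (1 - η k * μ) * a k + η k * μ * (δ / 2) := by
    intro k hk
    have := hrec k
    rw [hC] at this
    have h3 : (η k) ^ 2 * M ^ 2 ≤ η k * μ * (δ / 2) := by
      have := hk0 k hk
      have hηk := (hηpos k).le
      calc (η k) ^ 2 * M ^ 2 = η k * (η k * M ^ 2) := by ring
        _ ≤ η k * (μ * (δ / 2)) := by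
            exact mul_le_mul_of_nonneg_left (hk0 k hk) hηk
        _ = η k * μ * (δ / 2) := by ring
    linarith
  -- existence of K ≥ k0 with a K ≤ δ
  have hex : ∃ K, k0 ≤ K ∧ a K ≤ δ := by
    by_contra hcon
    push_neg at hcon
    have hgt : ∀ k, k0 ≤ k → δ < a k := fun k hk => hcon k hk
    have hstep : ∀ n : ℕ,
        a (k0 + n) + (δ / 2) * ∑ i ∈ Finset.range n, η (k0 + i) * μ ≤ a k0 := by
      intro n
      induction n with
      | zero => simp
      | succ n ih =>
        have hk : k0 ≤ k0 + n := Nat.le_add_right _ _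
        have hr := hrec2 (k0 + n) hk
        have hg := hgt (k0 + n) hk
        have hb := hbpos (k0 + n)
        have hb' := hb1 (k0 + n)
        rw [Finset.sum_range_succ]
        have hdrop : a (k0 + n + 1) ≤ a (k0 + n) - η (k0 + n) * μ * (δ / 2) := by
          nlinarith
        have : a (k0 + (n + 1)) = a (k0 + n + 1) := by ring_nf
        rw [this]
        linarith
    -- contradiction with divergence of tail sums
    have htail : Tendsto (fun n => ∑ i ∈ Finset.range n, η (k0 + i) * μ) atTop atTop := by
      have h4 : Tendsto (fun n => ∑ k ∈ Finset.range (n + k0), η k * μ) atTop atTop :=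
        hdiv.comp (tendsto_add_atTop_nat k0)
      have h5 : Tendsto (fun n => (∑ k ∈ Finset.range (n + k0), η k * μ)
          - ∑ k ∈ Finset.range k0, η k * μ) atTop atTop :=
        tendsto_atTop_add_const_right _ _ h4
      refine h5.congr fun n => ?_
      rw [add_comm n k0, Finset.sum_range_add]
      ring
    obtain ⟨n, hn⟩ := (htail.eventually_gt_atTop ((a k0) / (δ / 2))).exists
    have := hstep n
    have h6 : a k0 < (δ / 2) * ∑ i ∈ Finset.range n, η (k0 + i) * μ := by
      rw [div_lt_iff₀ (by positivity : (0:ℝ) < δ / 2), mul_comm] at hn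
      exact hn
    linarith [ha0 (k0 + n)]
  obtain ⟨K, hKk0, hKδ⟩ := hex
  -- invariance: a n ≤ δ for n ≥ K
  have hinv : ∀ n, K ≤ n → a n ≤ δ := by
    intro n hn
    induction n with
    | zero => exact Nat.le_zero.1 hn ▸ hKδ
    | succ n ih =>
      rcases Nat.lt_or_ge K (n + 1) with h | h
      · have hn' : K ≤ n := Nat.lt_succ_iff.1 h
        have han := ih hn'
        have hr := hrec2 n (hKk0.trans hn')
        have hb := hbpos n
        have hb' := hb1 n
        nlinarith
      · have : K = n + 1 := le_antisymm hn h
        rw [← this]; exact hKδ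
  refine ⟨K, fun n hn => ?_⟩
  rw [Real.dist_eq, sub_zero, abs_of_nonneg (ha0 n)]
  have := hinv n hn
  rw [hδ] at this
  linarith
end

section
/- Let μ > 0 and η(k) = η_c/√(k+1) with 0 < η_c·μ ≤ 1, and set C_k = 1 − η(k)·μ. Define for k ≥ 2 the quantity S(k) = Σ_{t=0}^{k−2} ( Π_{l=t+1}^{k−1} C_l )·η(t)² + η(k−1)². Then for every ε > 0 there exists K such that S(k) ≤ ε for all k ≥ K; equivalently, lim_{k→∞} S(k) = 0. -/
/-! Unrolling once more gives `S (k + 1) = C k * S k + η k ^ 2`, a recursion of the form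
`a (n + 1) ≤ (1 - α n) a n + α n β n` with `α n = μ η (n + 1)`, which is not summable, and
`β n = η (n + 1) / μ → 0`. Once `β n < ε / 2`, the excess `a n - ε / 2` is multiplied at each step
by `1 - α n`, and `∏ (1 - α l) ≤ exp (-∑ α l) → 0`. -/

open Filter Finset Topology

theorem tendsto_prod_Ico_one_sub_atTop_zero {α : ℕ → ℝ} (hα0 : ∀ n, 0 ≤ α n)
    (hα1 : ∀ n, α n ≤ 1) (hα : ¬ Summable α) (m : ℕ) :
    Tendsto (fun n => ∏ l ∈ Ico m n, (1 - α l)) atTop (𝓝 0) := by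
  have hsum : Tendsto (fun n => ∑ l ∈ range n, α l) atTop atTop :=
    (not_summable_iff_tendsto_nat_atTop_of_nonneg hα0).1 hα
  have hsumIco : Tendsto (fun n => ∑ l ∈ Ico m n, α l) atTop atTop := by
    refine (tendsto_atTop_add_const_right _ (-∑ l ∈ range m, α l) hsum).congr' ?_
    filter_upwards [eventually_ge_atTop m] with n hn
    rw [sum_Ico_eq_sub _ hn, sub_eq_add_neg]
  refine squeeze_zero (fun n => prod_nonneg fun l _ => sub_nonneg.2 (hα1 l)) (fun n => ?_)
    (Real.tendsto_exp_atBot.comp (tendsto_neg_atTop_atBot.comp hsumIco))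
  calc ∏ l ∈ Ico m n, (1 - α l)
      ≤ ∏ l ∈ Ico m n, Real.exp (-α l) :=
        prod_le_prod (fun l _ => sub_nonneg.2 (hα1 l)) fun l _ => Real.one_sub_le_exp_neg (α l)
    _ = Real.exp (-∑ l ∈ Ico m n, α l) := by rw [← sum_neg_distrib, Real.exp_sum]

theorem le_prod_Ico_mul_of_succ_le_mul {b c : ℕ → ℝ} {N : ℕ} (hc : ∀ n, 0 ≤ c n)
    (hb : ∀ n ≥ N, b (n + 1) ≤ c n * b n) : ∀ n ≥ N, b n ≤ (∏ l ∈ Ico N n, c l) * b N := by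
  intro n hn
  induction n, hn using Nat.le_induction with
  | base => simp
  | succ n hn ih =>
    calc b (n + 1) ≤ c n * b n := hb n hn
      _ ≤ c n * ((∏ l ∈ Ico N n, c l) * b N) := mul_le_mul_of_nonneg_left ih (hc n)
      _ = (∏ l ∈ Ico N (n + 1), c l) * b N := by rw [prod_Ico_succ_top hn]; ring

/-- Polyak's lemma. -/
theorem tendsto_zero_of_succ_le_one_sub_mul_add {a α β : ℕ → ℝ} (ha : ∀ n, 0 ≤ a n)
    (hα0 : ∀ n, 0 ≤ α n) (hα1 : ∀ n, α n ≤ 1) (hα : ¬ Summable α)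
    (hβ : Tendsto β atTop (𝓝 0)) (hrec : ∀ n, a (n + 1) ≤ (1 - α n) * a n + α n * β n) :
    Tendsto a atTop (𝓝 0) := by
  refine tendsto_order.2 ⟨fun c hc => .of_forall fun n => hc.trans_le (ha n), fun ε hε => ?_⟩
  obtain ⟨N, hN⟩ := eventually_atTop.1 (hβ.eventually (gt_mem_nhds (half_pos hε)))
  have hcontract : ∀ n ≥ N, a (n + 1) - ε / 2 ≤ (1 - α n) * (a n - ε / 2) := fun n hn => by
    nlinarith [hrec n, hN n hn, hα0 n]
  have hprod : Tendsto (fun n => (∏ l ∈ Ico N n, (1 - α l)) * (a N - ε / 2)) atTop (𝓝 0) := by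
    simpa using (tendsto_prod_Ico_one_sub_atTop_zero hα0 hα1 hα N).mul_const (a N - ε / 2)
  filter_upwards [eventually_ge_atTop N, hprod.eventually (gt_mem_nhds (half_pos hε))]
    with n hn hsmall
  linarith [le_prod_Ico_mul_of_succ_le_mul (b := fun n => a n - ε / 2) (fun n => sub_nonneg.2 (hα1 n)) hcontract n hn]

def accumulatedError (C w : ℕ → ℝ) (n : ℕ) : ℝ :=
  ∑ t ∈ range (n + 1), (∏ l ∈ Icc (t + 1) n, C l) * w t

theorem accumulatedError_succ (C w : ℕ → ℝ) (n : ℕ) :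
    accumulatedError C w (n + 1) = C (n + 1) * accumulatedError C w n + w (n + 1) := by
  rw [accumulatedError, sum_range_succ, accumulatedError, mul_sum]
  congr 1
  · refine sum_congr rfl fun t ht => ?_
    rw [prod_Icc_succ_top (by rw [mem_range] at ht; omega)]
    ring
  · simp

theorem accumulatedError_nonneg {C w : ℕ → ℝ} (hC : ∀ n, 0 ≤ C n) (hw : ∀ n, 0 ≤ w n)
    (n : ℕ) : 0 ≤ accumulatedError C w n :=
  sum_nonneg fun t _ => mul_nonneg (prod_nonneg fun l _ => hC l) (hw t)

theorem tendsto_div_sqrt_succ_atTop (c : ℝ) :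
    Tendsto (fun n : ℕ => c / √(n + 1)) atTop (𝓝 0) :=
  tendsto_const_nhds.div_atTop <| Real.tendsto_sqrt_atTop.comp <|
    tendsto_atTop_add_const_right _ 1 tendsto_natCast_atTop_atTop

theorem not_summable_div_sqrt_succ {c : ℝ} (hc : c ≠ 0) :
    ¬ Summable (fun n : ℕ => c / √(n + 1)) := by
  intro h
  have h' : Summable (fun n : ℕ => 1 / |(n : ℝ) + 1| ^ (1 / 2 : ℝ)) := by
    refine (h.mul_left c⁻¹).congr fun n => ?_
    rw [abs_of_nonneg (by positivity), ← Real.sqrt_eq_rpow]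
    field_simp
  exact absurd ((Real.summable_one_div_nat_add_rpow 1 _).1 h') (by norm_num)

/-- Let `μ > 0` and `η k = η_c / √(k+1)` with `0 < η_c * μ ≤ 1`,
and `C k = 1 - η k * μ`.  For `k ≥ 2` set
`S k = ∑_{t=0}^{k-2} (∏_{l=t+1}^{k-1} C l) * η t ^ 2 + η (k-1) ^ 2`.
Then `S k → 0` as `k → ∞` (equivalently, for every `ε > 0` the quantity `S k`
is ≤ ε for all sufficiently large `k`). -/
theorem statement_5 (μ ηc : ℝ) (hμ : 0 < μ) (hηc : 0 < ηc) (hηcμ : ηc * μ ≤ 1)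
    (η : ℕ → ℝ) (hη : ∀ k : ℕ, η k = ηc / Real.sqrt (k + 1))
    (C : ℕ → ℝ) (hC : ∀ k : ℕ, C k = 1 - η k * μ)
    (S : ℕ → ℝ)
    (hS : ∀ k : ℕ, 2 ≤ k → S k =
      (∑ t ∈ Finset.range (k - 1), (∏ l ∈ Finset.Icc (t + 1) (k - 1), C l) * η t ^ 2)
        + η (k - 1) ^ 2) :
    Tendsto S atTop (nhds 0) := by
  have hη_eq : η = fun n : ℕ => ηc / √(n + 1) := funext hη
  have hη0 : ∀ n, 0 ≤ η n := fun n => by rw [hη]; positivity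
  have hημ : ∀ n, μ * η n ≤ 1 := fun n => by
    have : η n ≤ ηc := by rw [hη]; exact div_le_self hηc.le (by simp)
    nlinarith
  have hC0 : ∀ n, 0 ≤ C n := fun n => by rw [hC]; linarith [hημ n]
  have hα : ¬ Summable (fun n => μ * η (n + 1)) := fun h =>
    not_summable_div_sqrt_succ hηc.ne' <| hη_eq ▸
      (summable_nat_add_iff 1).1 ((h.mul_left μ⁻¹).congr fun n => by field_simp)
  have hβ : Tendsto (fun n => η (n + 1) / μ) atTop (𝓝 0) := by
    rw [← zero_div μ]
    exact ((hη_eq ▸ tendsto_div_sqrt_succ_atTop ηc).comp (tendsto_add_atTop_nat 1)).div_const μ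
  have herror : Tendsto (accumulatedError C (η · ^ 2)) atTop (𝓝 0) := by
    refine tendsto_zero_of_succ_le_one_sub_mul_add (accumulatedError_nonneg hC0 fun n => sq_nonneg _)
      (fun n => mul_nonneg hμ.le (hη0 _)) (fun n => hημ _) hα hβ fun n => le_of_eq ?_
    rw [accumulatedError_succ, hC]
    field_simp
  refine (herror.comp (tendsto_sub_atTop_nat 1)).congr' ?_
  filter_upwards [eventually_ge_atTop 2] with k hk
  rw [hS k hk, Function.comp_apply, accumulatedError, sum_range_succ]
  simp
end
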